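/- arXiv:math/0311110 — 4 statements merged into one kernel-verified Lean document; each statement's English description precedes it below -/
import Mathlib

section
/- Let B ⊆ B(G) be a von Neumann algebra, H a complex Hilbert space, and E ⊆ B(G,H) a subspace closed in the strong operator topology such that xb ∈ E and x*y ∈ B for all x, y ∈ E and b ∈ B (a concrete von Neumann B-module). Then E possesses a complete quasi orthonormal system: there is a family (e_i)_{i∈I} of elements of E such that e_i* e_j = 0 for i ≠ j, each p_i := e_i* e_i is a nonzero projection in B, and for every x ∈ E the net of finite partial sums Σ_{i∈I'} e_i e_i* x (over finite subsets I' ⊆ I) converges to x in the strong operator topology. Moreover, the family (e_i)_{i∈I} can be chosen so as to contain any prescribed family of elements of E already having these orthogonality properties. -/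
/-!
Extend the prescribed family, by Zorn's lemma, to a maximal quasi orthonormal family `M ⊆ E`.
For `x ∈ E` the vectors `e (e* (x g))`, `e ∈ M`, are mutually orthogonal and obey Bessel's
inequality, so their partial sums converge to `Q (x g)` for a bounded operator `Q`. The
remainder `x' = x - Q x` lies in `E` by strong closedness and satisfies `e* x' = 0` for all
`e ∈ M`, so maximality forces `x' = 0` once every nonzero `x' ∈ E` is shown to produce a new
element of the family "below" it.

That element is obtained by a polar-decomposition argument inside the functional calculus of
`a = x'* x' ∈ B`. Let `f₀` be a continuous cutoff vanishing on `[0, ‖a‖/2]` with `f₀ ‖a‖ = 1`,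
let `fₙ₊₁ = √fₙ`, and choose continuous `wₙ` with `wₙ(t)² t = fₙ(t)`. The operators
`x' wₙ(a) ∈ E` and `fₙ(a)` are strongly Cauchy, because the quadratic forms of the increasing
sequence `fₙ(a) ≤ 1` converge. The limit `e` of `x' wₙ(a)` therefore satisfies
`e* e = lim fₙ(a)`, which is a projection since `fₙ₊₁² = fₙ`, and is nonzero since it
dominates `f₀(a) ≠ 0`.
-/

open scoped InnerProductSpace
open Filter ContinuousLinearMap

noncomputable section

universe u

variable {G H : Type u}
  [NormedAddCommGroup G] [InnerProductSpace ℂ G] [CompleteSpace G]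
  [NormedAddCommGroup H] [InnerProductSpace ℂ H] [CompleteSpace H]

/-- A set of operators is closed in the strong operator topology
(net/filter formulation of closedness). -/
def SOTClosed (E : Set (G →L[ℂ] H)) : Prop :=
  ∀ (l : Filter (G →L[ℂ] H)) (x : G →L[ℂ] H), l.NeBot → (∀ᶠ y in l, y ∈ E) →
    (∀ g : G, Tendsto (fun y : G →L[ℂ] H => y g) l (nhds (x g))) → x ∈ E

open Topology

theorem cauchySeq_of_dist_sq_le {β X : Type*} [SemilatticeSup β] [Nonempty β] [PseudoMetricSpace X]
    {s : β → X} {t : β → ℝ} (ht : CauchySeq t)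
    (h : ∀ a b, a ≤ b → dist (s b) (s a) ^ 2 ≤ t b - t a) : CauchySeq s := by
  rw [Metric.cauchySeq_iff'] at ht ⊢
  intro ε hε
  obtain ⟨N, hN⟩ := ht (ε ^ 2) (by positivity)
  refine ⟨N, fun n hn => lt_of_pow_lt_pow_left₀ 2 hε.le ?_⟩
  have h₁ := h N n hn
  have h₂ := hN n hn
  rw [Real.dist_eq] at h₂
  linarith [le_abs_self (t n - t N)]

/- `rootCutoff ν n` is the `2ⁿ`-th root of the piecewise linear function that vanishes on
`(-∞, ν/2]` and equals `1` on `[ν, ∞)`. Where the numerator of `rootCutoffWeight` is nonzero its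
denominator is `√t`, so `t * rootCutoffWeight ν n t ^ 2 = rootCutoff ν n t` for `t ≥ 0`; taking
`max t (ν / 2)` instead of `t` keeps the weight continuous at `0`. -/
def rootCutoff (ν : ℝ) (n : ℕ) (t : ℝ) : ℝ := Real.sqrt^[n] (min 1 (max 0 (2 * t / ν - 1)))

def rootCutoffWeight (ν : ℝ) (n : ℕ) (t : ℝ) : ℝ := rootCutoff ν (n + 1) t / √(max t (ν / 2))

section Cutoff

variable {ν : ℝ}

theorem rootCutoff_succ (n : ℕ) (t : ℝ) : rootCutoff ν (n + 1) t = √(rootCutoff ν n t) :=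
  Function.iterate_succ_apply' _ _ _

theorem rootCutoff_nonneg (n : ℕ) (t : ℝ) : 0 ≤ rootCutoff ν n t := by
  cases n with
  | zero => exact le_min zero_le_one (le_max_left _ _)
  | succ n => rw [rootCutoff_succ]; exact Real.sqrt_nonneg _

theorem rootCutoff_le_one (n : ℕ) (t : ℝ) : rootCutoff ν n t ≤ 1 := by
  induction n with
  | zero => exact min_le_left _ _
  | succ n ih => rwa [rootCutoff_succ, Real.sqrt_le_one]

theorem rootCutoff_succ_mul_self (n : ℕ) (t : ℝ) :
    rootCutoff ν (n + 1) t * rootCutoff ν (n + 1) t = rootCutoff ν n t := by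
  rw [rootCutoff_succ, Real.mul_self_sqrt (rootCutoff_nonneg n t)]

theorem monotone_rootCutoff (t : ℝ) : Monotone fun n => rootCutoff ν n t :=
  monotone_nat_of_le_succ fun n => by
    rw [rootCutoff_succ, Real.le_sqrt_self_iff]
    exact rootCutoff_le_one n t

theorem rootCutoff_eq_zero (hν : 0 < ν) {t : ℝ} (ht : t ≤ ν / 2) (n : ℕ) :
    rootCutoff ν n t = 0 := by
  induction n with
  | zero =>
    have : 2 * t / ν - 1 ≤ 0 := by
      rw [sub_nonpos, div_le_one hν]
      linarith
    simp [rootCutoff, max_eq_left this]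
  | succ n ih => rw [rootCutoff_succ, ih, Real.sqrt_zero]

theorem rootCutoff_zero_self (hν : 0 < ν) : rootCutoff ν 0 ν = 1 := by
  have : 2 * ν / ν - 1 = 1 := by field_simp; norm_num
  simp [rootCutoff, this]

@[fun_prop]
theorem continuous_rootCutoff (n : ℕ) : Continuous (rootCutoff ν n) := by
  induction n with
  | zero => unfold rootCutoff; fun_prop
  | succ n ih =>
    simp_rw [funext (rootCutoff_succ (ν := ν) n)]
    exact Real.continuous_sqrt.comp ih

theorem continuous_rootCutoffWeight (hν : 0 < ν) (n : ℕ) : Continuous (rootCutoffWeight ν n) :=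
  (continuous_rootCutoff _).div (by fun_prop) fun t =>
    (Real.sqrt_pos.2 (lt_max_of_lt_right (half_pos hν))).ne'

theorem rootCutoffWeight_mul_sqrt (hν : 0 < ν) {t : ℝ} (ht : ν / 2 < t) (n : ℕ) :
    rootCutoffWeight ν n t * √t = rootCutoff ν (n + 1) t := by
  have : 0 < √t := Real.sqrt_pos.2 (by linarith)
  rw [rootCutoffWeight, max_eq_left ht.le, div_mul_cancel₀ _ this.ne']

theorem rootCutoffWeight_mul_mul_self (hν : 0 < ν) {t : ℝ} (ht : 0 ≤ t) (n : ℕ) :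
    rootCutoffWeight ν n t * t * rootCutoffWeight ν n t = rootCutoff ν n t := by
  rcases le_or_gt t (ν / 2) with hle | hlt
  · simp [rootCutoffWeight, rootCutoff_eq_zero hν hle]
  · rw [← rootCutoff_succ_mul_self, ← rootCutoffWeight_mul_sqrt hν hlt]
    linear_combination rootCutoffWeight ν n t ^ 2 * (Real.mul_self_sqrt ht).symm

theorem rootCutoffWeight_sub_mul_mul_le (hν : 0 < ν) {t : ℝ} (ht : 0 ≤ t) {m n : ℕ}
    (hmn : m ≤ n) :
    (rootCutoffWeight ν n t - rootCutoffWeight ν m t) * t *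
        (rootCutoffWeight ν n t - rootCutoffWeight ν m t) ≤
      rootCutoff ν n t - rootCutoff ν m t := by
  rcases le_or_gt t (ν / 2) with hle | hlt
  · simp [rootCutoffWeight, rootCutoff_eq_zero hν hle]
  · have hsq : (rootCutoffWeight ν n t - rootCutoffWeight ν m t) * t *
          (rootCutoffWeight ν n t - rootCutoffWeight ν m t) =
        (rootCutoff ν (n + 1) t - rootCutoff ν (m + 1) t) ^ 2 := by
      rw [← rootCutoffWeight_mul_sqrt hν hlt, ← rootCutoffWeight_mul_sqrt hν hlt]
      linear_combination (rootCutoffWeight ν n t - rootCutoffWeight ν m t) ^ 2 *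
        (Real.mul_self_sqrt ht).symm
    rw [hsq, ← rootCutoff_succ_mul_self n, ← rootCutoff_succ_mul_self m]
    have h₀ := rootCutoff_nonneg (ν := ν) (m + 1) t
    have h₁ : rootCutoff ν (m + 1) t ≤ rootCutoff ν (n + 1) t := monotone_rootCutoff t (by omega)
    nlinarith

end Cutoff

theorem VonNeumannAlgebra.cfc_mem (B : VonNeumannAlgebra G) {a : G →L[ℂ] G} (ha : a ∈ B)
    (f : ℝ → ℝ) : cfc f a ∈ B := by
  rw [← SetLike.mem_coe, ← B.centralizer_centralizer]
  exact fun c hc => (Commute.cfc_real (hc a ha) f).eq.symm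

namespace ContinuousLinearMap

section PartialIsometry

variable {f g : G →L[ℂ] H}

theorem comp_adjoint_comp_self_of_isIdempotentElem (hf : IsIdempotentElem (adjoint f ∘L f)) :
    f ∘L (adjoint f ∘L f) = f := by
  ext v
  -- `f` vanishes on the kernel of `f† f`, which contains `f† f v - v`
  have hker : (adjoint f ∘L f) ((adjoint f ∘L f) v - v) = 0 := by
    rw [map_sub, sub_eq_zero]
    exact congr($hf v)
  have : f ((adjoint f ∘L f) v - v) = 0 := by
    rw [← norm_eq_zero, ← sq_eq_zero_iff (M₀ := ℝ), apply_norm_sq_eq_inner_adjoint_left, hker,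
      inner_zero_left, map_zero]
  rwa [map_sub, sub_eq_zero] at this

theorem adjoint_comp_self_comp_adjoint_of_isIdempotentElem
    (hf : IsIdempotentElem (adjoint f ∘L f)) : (adjoint f ∘L f) ∘L adjoint f = adjoint f := by
  simpa [adjoint_comp] using congrArg adjoint (comp_adjoint_comp_self_of_isIdempotentElem hf)

theorem norm_apply_adjoint_apply_sq (hf : IsIdempotentElem (adjoint f ∘L f)) (y : H) :
    ‖f (adjoint f y)‖ ^ 2 = RCLike.re ⟪y, f (adjoint f y)⟫_ℂ := by
  rw [apply_norm_sq_eq_inner_adjoint_left, ← comp_apply _ (adjoint f),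
    adjoint_comp_self_comp_adjoint_of_isIdempotentElem hf, adjoint_inner_left]

theorem adjoint_comp_eq_zero_comm : adjoint f ∘L g = 0 ↔ adjoint g ∘L f = 0 := by
  have key : ∀ f g : G →L[ℂ] H, adjoint f ∘L g = 0 → adjoint g ∘L f = 0 := fun f g h => by
    simpa [adjoint_comp] using congrArg adjoint h
  exact ⟨key f g, key g f⟩

end PartialIsometry

theorem isIdempotentElem_of_adjoint_comp_self_eq {q : G →L[ℂ] G} (hq : adjoint q ∘L q = q) :
    IsIdempotentElem q := by
  have hsa : adjoint q = q := by
    have h := congrArg adjoint hq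
    rw [adjoint_comp, adjoint_adjoint] at h
    exact h.symm.trans hq
  change q ∘L q = q
  rwa [hsa] at hq

section OrthogonalPartialIsometries

variable {ι : Type*} {e : ι → G →L[ℂ] H}

theorem orthogonalFamily_range (horth : Pairwise fun i j => adjoint (e i) ∘L e j = 0) :
    OrthogonalFamily ℂ (fun i => (e i).range) fun i => (e i).range.subtypeₗᵢ := by
  rintro i j hij ⟨_, a, rfl⟩ ⟨_, b, rfl⟩
  change ⟪e i a, e j b⟫_ℂ = 0
  rw [← adjoint_inner_right, ← comp_apply, horth hij, zero_apply, inner_zero_right]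

theorem norm_sum_apply_adjoint_apply_sq (horth : Pairwise fun i j => adjoint (e i) ∘L e j = 0)
    (y : H) (s : Finset ι) :
    ‖∑ i ∈ s, e i (adjoint (e i) y)‖ ^ 2 = ∑ i ∈ s, ‖e i (adjoint (e i) y)‖ ^ 2 :=
  (orthogonalFamily_range horth).norm_sum (fun i => ⟨_, adjoint (e i) y, rfl⟩) s

theorem norm_sum_apply_adjoint_apply_le (hidem : ∀ i, IsIdempotentElem (adjoint (e i) ∘L e i))
    (horth : Pairwise fun i j => adjoint (e i) ∘L e j = 0) (y : H) (s : Finset ι) :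
    ‖∑ i ∈ s, e i (adjoint (e i) y)‖ ≤ ‖y‖ := by
  set v := ∑ i ∈ s, e i (adjoint (e i) y)
  have hv : ‖v‖ ^ 2 ≤ ‖y‖ * ‖v‖ :=
    calc ‖v‖ ^ 2 = RCLike.re ⟪y, v⟫_ℂ := by
          rw [norm_sum_apply_adjoint_apply_sq horth, inner_sum, map_sum]
          exact Finset.sum_congr rfl fun i _ => norm_apply_adjoint_apply_sq (hidem i) y
      _ ≤ ‖⟪y, v⟫_ℂ‖ := RCLike.re_le_norm _
      _ ≤ ‖y‖ * ‖v‖ := norm_inner_le_norm _ _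
  nlinarith [norm_nonneg v, norm_nonneg y]

theorem summable_apply_adjoint_apply (hidem : ∀ i, IsIdempotentElem (adjoint (e i) ∘L e i))
    (horth : Pairwise fun i j => adjoint (e i) ∘L e j = 0) (y : H) :
    Summable fun i => e i (adjoint (e i) y) := by
  refine ((orthogonalFamily_range horth).summable_iff_norm_sq_summable
    (fun i => ⟨_, adjoint (e i) y, rfl⟩)).mpr (summable_of_sum_le (c := ‖y‖ ^ 2)
      (fun i => sq_nonneg _) fun s => ?_)
  change ∑ i ∈ s, ‖e i (adjoint (e i) y)‖ ^ 2 ≤ _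
  rw [← norm_sum_apply_adjoint_apply_sq horth]
  gcongr
  exact norm_sum_apply_adjoint_apply_le hidem horth y s

theorem exists_hasSum_apply_adjoint_apply
    (hidem : ∀ i, IsIdempotentElem (adjoint (e i) ∘L e i))
    (horth : Pairwise fun i j => adjoint (e i) ∘L e j = 0) :
    ∃ Q : H →L[ℂ] H, (∀ y, HasSum (fun i => e i (adjoint (e i) y)) (Q y)) ∧
      ∀ j, adjoint (e j) ∘L Q = adjoint (e j) := by
  let Qs : Finset ι → H →L[ℂ] H := fun s => ∑ i ∈ s, e i ∘L adjoint (e i)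
  have hQs : ∀ s y, Qs s y = ∑ i ∈ s, e i (adjoint (e i) y) := fun s y => by simp [Qs]
  have hbdd : Bornology.IsBounded (Set.range Qs) := by
    refine isBounded_iff_forall_norm_le.2 ⟨1, ?_⟩
    rintro _ ⟨s, rfl⟩
    refine opNorm_le_bound _ zero_le_one fun y => ?_
    rw [hQs, one_mul]
    exact norm_sum_apply_adjoint_apply_le hidem horth y s
  let Q := ofTendstoOfBoundedRange _ Qs (tendsto_pi_nhds.2 fun y => by
    simp only [hQs]
    exact (summable_apply_adjoint_apply hidem horth y).hasSum) hbdd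
  have hQ : ∀ y, HasSum (fun i => e i (adjoint (e i) y)) (Q y) := fun y =>
    (summable_apply_adjoint_apply hidem horth y).hasSum
  refine ⟨Q, hQ, fun j => ext fun y => ?_⟩
  have hsingle : HasSum (fun i => adjoint (e j) (e i (adjoint (e i) y))) (adjoint (e j) y) := by
    convert hasSum_single j fun i hij => ?_ using 1
    · rw [← comp_apply (adjoint (e j)), ← comp_apply _ (adjoint (e j)),
        adjoint_comp_self_comp_adjoint_of_isIdempotentElem (hidem j)]
    · rw [← comp_apply (adjoint (e j)), horth hij.symm, zero_apply]
  exact ((adjoint (e j)).hasSum (hQ y)).unique hsingle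

end OrthogonalPartialIsometries

section StrongLimits

variable {α : Type*} {l : Filter α}

theorem isPositive_of_tendsto_apply {X : Type*} [NormedAddCommGroup X] [InnerProductSpace ℂ X]
    [l.NeBot] {T : α → X →L[ℂ] X} {S : X →L[ℂ] X}
    (hT : ∀ x, Tendsto (fun i => T i x) l (𝓝 (S x))) (hpos : ∀ᶠ i in l, (T i).IsPositive) :
    S.IsPositive := by
  have hclosed : IsClosed {z : ℂ | ((RCLike.re z : ℝ) : ℂ) = z ∧ 0 ≤ RCLike.re z} :=
    (isClosed_eq (RCLike.continuous_ofReal.comp RCLike.continuous_re) continuous_id).inter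
      (isClosed_le continuous_const RCLike.continuous_re)
  rw [isPositive_iff_complex]
  exact fun x => hclosed.mem_of_tendsto ((hT x).inner tendsto_const_nhds)
    (hpos.mono fun i hi => (isPositive_iff_complex _).mp hi x)

theorem le_of_tendsto_apply_of_monotone {X : Type*} [NormedAddCommGroup X]
    [InnerProductSpace ℂ X] [SemilatticeSup α] [Nonempty α] {A : α → X →L[ℂ] X} {q : X →L[ℂ] X}
    (hA : Monotone A) (hq : ∀ x, Tendsto (fun i => A i x) atTop (𝓝 (q x))) (i : α) :
    A i ≤ q :=
  isPositive_of_tendsto_apply (T := fun j => A j - A i)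
    (fun x => by simpa using (hq x).sub_const (A i x))
    (eventually_atTop.2 ⟨i, fun _ hj => hA hj⟩)

theorem adjoint_comp_self_eq_of_tendsto_apply [l.NeBot] {S : α → G →L[ℂ] H} {e : G →L[ℂ] H}
    {A : α → G →L[ℂ] G} {q : G →L[ℂ] G} (hS : ∀ g, Tendsto (fun i => S i g) l (𝓝 (e g)))
    (hA : ∀ g, Tendsto (fun i => A i g) l (𝓝 (q g)))
    (hSA : ∀ i, adjoint (S i) ∘L S i = A i) : adjoint e ∘L e = q := by
  ext g
  refine ext_inner_left ℂ fun g' => ?_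
  have hlim : Tendsto (fun i => ⟪g', A i g⟫_ℂ) l (𝓝 ⟪g', (adjoint e ∘L e) g⟫_ℂ) := by
    simp_rw [← hSA, comp_apply, adjoint_inner_right]
    exact (hS g').inner (hS g)
  exact tendsto_nhds_unique hlim (tendsto_const_nhds.inner (hA g))

theorem exists_tendsto_apply_of_cauchySeq {𝕜 X Y : Type*} [NontriviallyNormedField 𝕜]
    [NormedAddCommGroup X] [NormedSpace 𝕜 X] [CompleteSpace X]
    [NormedAddCommGroup Y] [NormedSpace 𝕜 Y] [CompleteSpace Y] {T : ℕ → X →L[𝕜] Y}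
    (hT : ∀ x, CauchySeq fun n => T n x) :
    ∃ S : X →L[𝕜] Y, ∀ x, Tendsto (fun n => T n x) atTop (𝓝 (S x)) := by
  choose f hf using fun x => cauchySeq_tendsto_of_complete (hT x)
  exact ⟨continuousLinearMapOfTendsto T (tendsto_pi_nhds.2 hf), hf⟩

theorem re_inner_apply_le_of_le {𝕜 X : Type*} [RCLike 𝕜] [NormedAddCommGroup X]
    [InnerProductSpace 𝕜 X] {T T' : X →L[𝕜] X} (h : T ≤ T') (x : X) :
    RCLike.re ⟪T x, x⟫_𝕜 ≤ RCLike.re ⟪T' x, x⟫_𝕜 := by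
  have := ((le_def T T').mp h).re_inner_nonneg_left x
  rw [sub_apply, inner_sub_left, map_sub] at this
  linarith

theorem cauchySeq_apply_of_adjoint_comp_le {β : Type*} [SemilatticeSup β] [Nonempty β]
    {S : β → G →L[ℂ] H} {A : β → G →L[ℂ] G} {C : G →L[ℂ] G}
    (hA : Monotone A) (hC : ∀ i, A i ≤ C)
    (h : ∀ i j, i ≤ j → adjoint (S j - S i) ∘L (S j - S i) ≤ A j - A i) (g : G) :
    CauchySeq fun i => S i g := by
  have hφ : CauchySeq fun i => RCLike.re ⟪A i g, g⟫_ℂ :=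
    (tendsto_atTop_ciSup (fun i j hij => re_inner_apply_le_of_le (hA hij) g)
      ⟨_, Set.forall_mem_range.2 fun i => re_inner_apply_le_of_le (hC i) g⟩).cauchySeq
  refine cauchySeq_of_dist_sq_le hφ fun i j hij => ?_
  calc dist (S j g) (S i g) ^ 2 = RCLike.re ⟪(adjoint (S j - S i) ∘L (S j - S i)) g, g⟫_ℂ := by
        rw [dist_eq_norm, ← sub_apply, apply_norm_sq_eq_inner_adjoint_left]
    _ ≤ RCLike.re ⟪(A j - A i) g, g⟫_ℂ := re_inner_apply_le_of_le (h i j hij) g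
    _ = RCLike.re ⟪A j g, g⟫_ℂ - RCLike.re ⟪A i g, g⟫_ℂ := by
        rw [sub_apply, inner_sub_left, map_sub]

end StrongLimits

theorem adjoint_cfc_comp_cfc {a : G →L[ℂ] G} (f : ℝ → ℝ)
    (hf : ContinuousOn f (spectrum ℝ a) := by cfc_cont_tac) :
    adjoint (cfc f a) ∘L cfc f a = cfc (fun t => f t * f t) a := by
  rw [(cfc_predicate f a).adjoint_eq, cfc_mul f f a]
  rfl

theorem adjoint_comp_cfc_comp_comp_cfc (T : G →L[ℂ] H) (w : ℝ → ℝ)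
    (hw : ContinuousOn w (spectrum ℝ (adjoint T ∘L T)) := by cfc_cont_tac) :
    adjoint (T ∘L cfc w (adjoint T ∘L T)) ∘L (T ∘L cfc w (adjoint T ∘L T)) =
      cfc (fun t => w t * t * w t) (adjoint T ∘L T) := by
  set a := adjoint T ∘L T
  have hsa : IsSelfAdjoint a := (isPositive_adjoint_comp_self T).isSelfAdjoint
  rw [adjoint_comp, (cfc_predicate w a).adjoint_eq, cfc_mul (fun t => w t * t) w a,
    cfc_mul w (fun t => t) a, cfc_id' ℝ a]
  rfl

section Cutoff

variable {ν : ℝ}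

theorem monotone_cfc_rootCutoff (a : G →L[ℂ] G) : Monotone fun n => cfc (rootCutoff ν n) a :=
  fun _ _ hmn => cfc_mono fun t _ => monotone_rootCutoff t hmn

theorem cfc_rootCutoff_le_one (a : G →L[ℂ] G) (n : ℕ) : cfc (rootCutoff ν n) a ≤ 1 :=
  cfc_le_one _ _ fun t _ => rootCutoff_le_one n t

theorem cauchySeq_cfc_rootCutoff_apply (a : G →L[ℂ] G) (g : G) :
    CauchySeq fun n => cfc (rootCutoff ν n) a g := by
  refine cauchySeq_apply_of_adjoint_comp_le (monotone_cfc_rootCutoff (ν := ν) a)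
    (cfc_rootCutoff_le_one a) (fun m n hmn => ?_) g
  rw [← cfc_sub (rootCutoff ν n) (rootCutoff ν m) a,
    adjoint_cfc_comp_cfc fun t => rootCutoff ν n t - rootCutoff ν m t]
  refine cfc_mono fun t _ => ?_
  have h₀ := rootCutoff_nonneg (ν := ν) m t
  have h₁ := rootCutoff_le_one (ν := ν) n t
  have h₂ := monotone_rootCutoff (ν := ν) t hmn
  nlinarith

theorem cauchySeq_comp_cfc_rootCutoffWeight_apply (hν : 0 < ν) (T : G →L[ℂ] H) (g : G) :
    CauchySeq fun n => (T ∘L cfc (rootCutoffWeight ν n) (adjoint T ∘L T)) g := by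
  have hw := continuous_rootCutoffWeight hν
  refine cauchySeq_apply_of_adjoint_comp_le
    (monotone_cfc_rootCutoff (ν := ν) (adjoint T ∘L T)) (cfc_rootCutoff_le_one _)
    (fun m n hmn => ?_) g
  have hpos : 0 ≤ adjoint T ∘L T := (nonneg_iff_isPositive _).2 (isPositive_adjoint_comp_self T)
  rw [← comp_sub, ← cfc_sub (rootCutoffWeight ν n) (rootCutoffWeight ν m),
    adjoint_comp_cfc_comp_comp_cfc T fun t => rootCutoffWeight ν n t - rootCutoffWeight ν m t,
    ← cfc_sub (rootCutoff ν n) (rootCutoff ν m)]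
  exact cfc_mono fun t ht =>
    rootCutoffWeight_sub_mul_mul_le hν (spectrum_nonneg_of_nonneg hpos ht) hmn

theorem exists_tendsto_comp_cfc_rootCutoffWeight {T : G →L[ℂ] H} (hT : T ≠ 0) :
    ∃ e : G →L[ℂ] H, (∀ g, Tendsto (fun n => (T ∘L cfc (rootCutoffWeight ‖adjoint T ∘L T‖ n)
      (adjoint T ∘L T)) g) atTop (𝓝 (e g))) ∧
      IsIdempotentElem (adjoint e ∘L e) ∧ adjoint e ∘L e ≠ 0 := by
  set a := adjoint T ∘L T
  set ν := ‖a‖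
  have hpos : 0 ≤ a := (nonneg_iff_isPositive _).2 (isPositive_adjoint_comp_self T)
  have ha : a ≠ 0 := adjoint_comp_self_eq_zero_iff.not.2 hT
  have : Nontrivial (G →L[ℂ] G) := nontrivial_of_ne a 0 ha
  have hν : 0 < ν := norm_pos_iff.2 ha
  have hw := continuous_rootCutoffWeight hν
  obtain ⟨q, hq⟩ := exists_tendsto_apply_of_cauchySeq (cauchySeq_cfc_rootCutoff_apply (ν := ν) a)
  obtain ⟨e, he⟩ :=
    exists_tendsto_apply_of_cauchySeq (cauchySeq_comp_cfc_rootCutoffWeight_apply hν T)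
  have heq : adjoint e ∘L e = q := adjoint_comp_self_eq_of_tendsto_apply he hq
    fun n => by
      rw [adjoint_comp_cfc_comp_comp_cfc T (rootCutoffWeight ν n)]
      exact cfc_congr fun t ht =>
        rootCutoffWeight_mul_mul_self hν (spectrum_nonneg_of_nonneg hpos ht) n
  -- `fₙ₊₁(a)` also tends to `q`, and `fₙ₊₁(a)† fₙ₊₁(a) = fₙ(a)`
  have hqq : adjoint q ∘L q = q :=
    adjoint_comp_self_eq_of_tendsto_apply (fun g => (hq g).comp (tendsto_add_atTop_nat 1)) hq
      fun n => by
        rw [adjoint_cfc_comp_cfc (rootCutoff ν (n + 1))]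
        exact cfc_congr fun t _ => rootCutoff_succ_mul_self n t
  refine ⟨e, he, heq ▸ isIdempotentElem_of_adjoint_comp_self_eq hqq, heq ▸ fun hq0 => ?_⟩
  have hA₀ : cfc (rootCutoff ν 0) a = cfc (0 : ℝ → ℝ) a := by
    rw [cfc_zero]
    exact le_antisymm (hq0 ▸ le_of_tendsto_apply_of_monotone (monotone_cfc_rootCutoff a) hq 0)
      (cfc_nonneg fun t _ => rootCutoff_nonneg 0 t)
  -- `ν = ‖a‖` lies in the spectrum, and `rootCutoff ν 0` equals one there
  have hzero := eqOn_of_cfc_eq_cfc hA₀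
  have h : rootCutoff ν 0 ν = 0 := hzero (CStarAlgebra.norm_mem_spectrum_of_nonneg hpos)
  rw [rootCutoff_zero_self hν] at h
  exact one_ne_zero h

end Cutoff

end ContinuousLinearMap

theorem SOTClosed.exists_mem_isIdempotentElem_of_ne_zero {B : VonNeumannAlgebra G}
    {E : Set (G →L[ℂ] H)} (hE : SOTClosed E) (hmod : ∀ x ∈ E, ∀ b ∈ B, x ∘L b ∈ E)
    (hinner : ∀ x ∈ E, ∀ y ∈ E, adjoint x ∘L y ∈ B) {x : G →L[ℂ] H} (hx : x ∈ E) (hx0 : x ≠ 0) :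
    ∃ e ∈ E, IsIdempotentElem (adjoint e ∘L e) ∧ adjoint e ∘L e ≠ 0 ∧
      ∀ f : G →L[ℂ] H, adjoint f ∘L x = 0 → adjoint f ∘L e = 0 := by
  obtain ⟨e, he, hidem, hne⟩ := exists_tendsto_comp_cfc_rootCutoffWeight hx0
  refine ⟨e, hE _ e map_neBot (eventually_map.2 (Eventually.of_forall fun n =>
    hmod x hx _ (B.cfc_mem (hinner x hx x hx) _))) (fun g => tendsto_map'_iff.2 (he g)),
    hidem, hne, fun f hf => ext fun g => ?_⟩
  refine tendsto_nhds_unique (((adjoint f).continuous.tendsto _).comp (he g))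
    (tendsto_const_nhds.congr fun n => ?_)
  rw [Function.comp_apply, comp_apply, ← comp_apply (adjoint f) x, hf]
  rfl

structure IsQuasiOrthonormalIn (E M : Set (G →L[ℂ] H)) : Prop where
  subset : M ⊆ E
  pairwise : M.Pairwise fun f f' => adjoint f ∘L f' = 0
  isIdempotentElem : ∀ f ∈ M, IsIdempotentElem (adjoint f ∘L f)
  ne_zero : ∀ f ∈ M, adjoint f ∘L f ≠ 0

namespace IsQuasiOrthonormalIn

variable {E M : Set (G →L[ℂ] H)}

theorem sUnion {c : Set (Set (G →L[ℂ] H))} (hc : ∀ M ∈ c, IsQuasiOrthonormalIn E M)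
    (hchain : IsChain (· ⊆ ·) c) : IsQuasiOrthonormalIn E (⋃₀ c) where
  subset := Set.sUnion_subset fun M hM => (hc M hM).subset
  pairwise := hchain.pairwise_sUnion.2 fun M hM => (hc M hM).pairwise
  isIdempotentElem := fun f ⟨M, hM, hf⟩ => (hc M hM).isIdempotentElem f hf
  ne_zero := fun f ⟨M, hM, hf⟩ => (hc M hM).ne_zero f hf

theorem insert (hM : IsQuasiOrthonormalIn E M) {e : G →L[ℂ] H} (he : e ∈ E)
    (hidem : IsIdempotentElem (adjoint e ∘L e)) (hne : adjoint e ∘L e ≠ 0)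
    (horth : ∀ f ∈ M, adjoint f ∘L e = 0) : IsQuasiOrthonormalIn E (insert e M) where
  subset := Set.insert_subset he hM.subset
  pairwise := hM.pairwise.insert fun f hf _ =>
    ⟨adjoint_comp_eq_zero_comm.1 (horth f hf), horth f hf⟩
  isIdempotentElem := Set.forall_mem_insert.2 ⟨hidem, hM.isIdempotentElem⟩
  ne_zero := Set.forall_mem_insert.2 ⟨hne, hM.ne_zero⟩

theorem exists_maximal (hM : IsQuasiOrthonormalIn E M) :
    ∃ M', M ⊆ M' ∧ Maximal (IsQuasiOrthonormalIn E) M' :=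
  zorn_subset_nonempty {M | IsQuasiOrthonormalIn E M}
    (fun c hc hchain _ => ⟨⋃₀ c, sUnion hc hchain, fun _ => Set.subset_sUnion_of_mem⟩) M hM

end IsQuasiOrthonormalIn

theorem Maximal.tendsto_sum_apply_adjoint_apply {B : VonNeumannAlgebra G}
    {E : Submodule ℂ (G →L[ℂ] H)} (hE : SOTClosed (E : Set (G →L[ℂ] H)))
    (hmod : ∀ x ∈ E, ∀ b ∈ B, x ∘L b ∈ E) (hinner : ∀ x ∈ E, ∀ y ∈ E, adjoint x ∘L y ∈ B)
    {M : Set (G →L[ℂ] H)} (hM : Maximal (IsQuasiOrthonormalIn E) M) {x : G →L[ℂ] H} (hx : x ∈ E)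
    (g : G) :
    Tendsto (fun s : Finset M => ∑ i ∈ s, (i : G →L[ℂ] H) (adjoint (i : G →L[ℂ] H) (x g)))
      atTop (𝓝 (x g)) := by
  have hME : ∀ i : M, (i : G →L[ℂ] H) ∈ E := fun i => hM.prop.subset i.2
  obtain ⟨Q, hQ, hQe⟩ := exists_hasSum_apply_adjoint_apply (e := ((↑) : M → G →L[ℂ] H))
    (fun i => hM.prop.isIdempotentElem i i.2)
    (fun i j hij => hM.prop.pairwise i.2 j.2 (Subtype.coe_injective.ne hij))
  suffices hQx : Q ∘L x = x by
    have h := hQ (x g)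
    rwa [← comp_apply Q x, hQx] at h
  by_contra hne
  have hrem : x - Q ∘L x ∈ E := by
    refine hE (map (fun s : Finset M => x - ∑ i ∈ s, (i : G →L[ℂ] H) ∘L (adjoint ↑i ∘L x)) atTop)
      _ map_neBot (eventually_map.2 (Eventually.of_forall fun s =>
      E.sub_mem hx (E.sum_mem fun i _ => hmod _ (hME i) _ (hinner _ (hME i) _ hx)))) fun y => ?_
    rw [tendsto_map'_iff]
    simpa [Function.comp_def] using (tendsto_const_nhds (x := x y)).sub (hQ (x y))
  have horth : ∀ f ∈ M, adjoint f ∘L (x - Q ∘L x) = 0 := fun f hf => by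
    rw [comp_sub, ← comp_assoc, hQe ⟨f, hf⟩, sub_self]
  obtain ⟨e, he, hidem, he0, hde⟩ :=
    hE.exists_mem_isIdempotentElem_of_ne_zero hmod hinner hrem (sub_ne_zero.2 (Ne.symm hne))
  have heM : e ∉ M := fun h => he0 (hde e (horth e h))
  exact heM (hM.mem_of_prop_insert (hM.prop.insert he hidem he0 fun f hf => hde f (horth f hf)))

/-- **Existence of complete quasi orthonormal systems in von Neumann modules.**
Let `B ⊆ B(G)` be a von Neumann algebra and `E ⊆ B(G,H)` a strongly closed subspace with
`E·B ⊆ E` and `E*·E ⊆ B` (a concrete von Neumann `B`-module).  Then, given any family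
`e₀ : I₀ → E` with `e₀ i* e₀ j = 0` for `i ≠ j` and each `e₀ i* e₀ i` a nonzero projection,
there is a complete quasi orthonormal system `e : I → E` containing the prescribed
family: the `e i` are mutually orthogonal, each `p i = e i* e i` is a nonzero projection
belonging to `B`, and for every `x ∈ E` the net of finite partial sums
`∑_{i ∈ I'} e i (e i)* x` converges to `x` in the strong operator topology. -/
theorem exists_complete_quasi_orthonormal_system
    (B : VonNeumannAlgebra G) (E : Set (G →L[ℂ] H))
    (hzero : (0 : G →L[ℂ] H) ∈ E)
    (hadd : ∀ x ∈ E, ∀ y ∈ E, x + y ∈ E)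
    (hsmul : ∀ (c : ℂ), ∀ x ∈ E, c • x ∈ E)
    (hclosed : SOTClosed E)
    (hmod : ∀ x ∈ E, ∀ b ∈ B, x ∘L b ∈ E)
    (hinner : ∀ x ∈ E, ∀ y ∈ E, (adjoint x) ∘L y ∈ B)
    {I₀ : Type u} (e₀ : I₀ → (G →L[ℂ] H))
    (he₀mem : ∀ i, e₀ i ∈ E)
    (he₀orth : ∀ i j, i ≠ j → (adjoint (e₀ i)) ∘L (e₀ j) = 0)
    (he₀idem : ∀ i, ((adjoint (e₀ i)) ∘L (e₀ i)) ∘L ((adjoint (e₀ i)) ∘L (e₀ i))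
      = (adjoint (e₀ i)) ∘L (e₀ i))
    (he₀ne : ∀ i, (adjoint (e₀ i)) ∘L (e₀ i) ≠ 0) :
    ∃ (I : Type u) (e : I → (G →L[ℂ] H)) (ι : I₀ → I),
      Function.Injective ι ∧
      (∀ i, e (ι i) = e₀ i) ∧
      (∀ i, e i ∈ E) ∧
      (∀ i j, i ≠ j → (adjoint (e i)) ∘L (e j) = 0) ∧
      (∀ i, ((adjoint (e i)) ∘L (e i)) ∘L ((adjoint (e i)) ∘L (e i))
        = (adjoint (e i)) ∘L (e i)) ∧
      (∀ i, (adjoint (e i)) ∘L (e i) ≠ 0) ∧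
      (∀ i, (adjoint (e i)) ∘L (e i) ∈ B) ∧
      (∀ x ∈ E, ∀ g : G,
        Tendsto (fun s : Finset I => ∑ i ∈ s, (e i) ((adjoint (e i)) (x g)))
          atTop (nhds (x g))) := by
  let E' : Submodule ℂ (G →L[ℂ] H) :=
    { carrier := E, add_mem' := fun hx hy => hadd _ hx _ hy, zero_mem' := hzero,
      smul_mem' := hsmul }
  have he₀inj : Function.Injective e₀ := fun i j hij =>
    by_contra fun hne => he₀ne j (hij ▸ he₀orth i j hne)
  have hM₀ : IsQuasiOrthonormalIn E (Set.range e₀) :=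
    ⟨Set.range_subset_iff.2 he₀mem,
      Pairwise.range_pairwise he₀orth,
      Set.forall_mem_range.2 he₀idem, Set.forall_mem_range.2 he₀ne⟩
  obtain ⟨M, hM₀M, hM⟩ := hM₀.exists_maximal
  exact ⟨M, (↑), fun i => ⟨e₀ i, hM₀M ⟨i, rfl⟩⟩, fun i j hij => he₀inj congr($hij.1),
    fun _ => rfl, fun i => hM.prop.subset i.2,
    fun i j hij => hM.prop.pairwise i.2 j.2 (Subtype.coe_injective.ne hij),
    fun i => hM.prop.isIdempotentElem i i.2, fun i => hM.prop.ne_zero i i.2,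
    fun i => hinner _ (hM.prop.subset i.2) _ (hM.prop.subset i.2),
    fun x hx => hM.tendsto_sum_apply_adjoint_apply (E := E') hclosed hmod hinner hx⟩
end
end

section
/- Let B ⊆ B(G) be a von Neumann algebra, H a complex Hilbert space, ρ' : B' → B(H) a unital *-homomorphism, and C = {x ∈ B(G,H) : ρ'(b') x = x b' for all b' ∈ B'} the intertwiner space. Assume the linear span of {x g : x ∈ C, g ∈ G} is dense in H. Then an operator a ∈ B(H) commutes with ρ'(b') for every b' ∈ B' if and only if a x ∈ C for every x ∈ C. That is, the commutant of ρ'(B') in B(H) equals {a ∈ B(H) : a C ⊆ C}, the algebra of adjointable operators on the von Neumann module C. -/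
/-!
Statement 10: the commutant of `ρ'(B')` in `B(H)` coincides with the algebra of
operators leaving the intertwiner space `C = C_{B'}(B(G,H))` invariant (the adjointable
operators on the von Neumann module `C`), provided `C` acts totally on `H`.
-/

open scoped InnerProductSpace ComplexOrder
open Filter ContinuousLinearMap

noncomputable section

universe u

section Defs

variable {X Y : Type u}
  [NormedAddCommGroup X] [InnerProductSpace ℂ X] [CompleteSpace X]
  [NormedAddCommGroup Y] [InnerProductSpace ℂ Y] [CompleteSpace Y]

/-- `S` is (complex-)linear on the subset `A`. -/
def LinearOn (A : Set (X →L[ℂ] X)) (S : (X →L[ℂ] X) → (Y →L[ℂ] Y)) : Prop :=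
  (∀ a₁ ∈ A, ∀ a₂ ∈ A, S (a₁ + a₂) = S a₁ + S a₂) ∧
    ∀ (c : ℂ), ∀ a ∈ A, S (c • a) = c • S a

/-- `S` is completely positive on `A`: for all `n`, `x : Fin n → A` and vectors
`v : Fin n → Y` the matrix-positivity expression `∑ ⟪v i, S (x i ∗ x j) (v j)⟫ ≥ 0` holds.
(This is the standard equivalent form of positivity of the entrywise applied maps on
`n × n` operator matrices.) -/
def CompletelyPositiveOn (A : Set (X →L[ℂ] X)) (S : (X →L[ℂ] X) → (Y →L[ℂ] Y)) : Prop :=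
  ∀ (n : ℕ) (x : Fin n → (X →L[ℂ] X)), (∀ i, x i ∈ A) → ∀ v : Fin n → Y,
    0 ≤ ∑ i, ∑ j, ⟪v i, (S (star (x i) * x j)) (v j)⟫_ℂ

/-- `S` is normal on `A`: the restriction of `S` to the closed unit ball of `A` is
continuous with respect to the weak operator topologies (net/filter formulation). -/
def NormalOn (A : Set (X →L[ℂ] X)) (S : (X →L[ℂ] X) → (Y →L[ℂ] Y)) : Prop :=
  ∀ (l : Filter (X →L[ℂ] X)), ∀ a ∈ A,
    (∀ᶠ x in l, x ∈ A ∧ ‖x‖ ≤ 1) →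
    (∀ x₁ x₂ : X, Tendsto (fun y => ⟪x₁, y x₂⟫_ℂ) l (nhds ⟪x₁, a x₂⟫_ℂ)) →
    ∀ y₁ y₂ : Y, Tendsto (fun y => ⟪y₁, (S y) y₂⟫_ℂ) l (nhds ⟪y₁, (S a) y₂⟫_ℂ)

/-- `j` is a ∗-homomorphism on `A`. -/
def StarHomOn (A : Set (X →L[ℂ] X)) (j : (X →L[ℂ] X) → (Y →L[ℂ] Y)) : Prop :=
  LinearOn A j ∧ (∀ a₁ ∈ A, ∀ a₂ ∈ A, j (a₁ * a₂) = j a₁ * j a₂) ∧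
    ∀ a ∈ A, j (star a) = star (j a)

end Defs


/-- **Adjointable operators on the intertwiner space = commutant of `ρ'(B')`.**
Let `B ⊆ B(G)` be a von Neumann algebra, `ρ' : B' → B(H)` a unital ∗-homomorphism and
`C = {x ∈ B(G,H) : ρ'(b') x = x b' for all b' ∈ B'}`, and assume `{x g : x ∈ C, g ∈ G}`
is total in `H`.  Then `a ∈ B(H)` commutes with every `ρ'(b')`, `b' ∈ B'`, if and only
if `a C ⊆ C`. -/
theorem commutant_of_commutant_lifting_eq_adjointable
    {G H : Type u}
    [NormedAddCommGroup G] [InnerProductSpace ℂ G] [CompleteSpace G]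
    [NormedAddCommGroup H] [InnerProductSpace ℂ H] [CompleteSpace H]
    (B : VonNeumannAlgebra G)
    (ρ' : (G →L[ℂ] G) → (H →L[ℂ] H))
    (hρ'hom : StarHomOn ((B.commutant : VonNeumannAlgebra G) : Set (G →L[ℂ] G)) ρ')
    (hρ'unital : ρ' 1 = 1)
    (htotal : Dense ((Submodule.span ℂ {h : H |
      ∃ x ∈ {x : G →L[ℂ] H | ∀ b' ∈ B.commutant, (ρ' b') ∘L x = x ∘L b'},
        ∃ g : G, x g = h} : Submodule ℂ H) : Set H))
    (a : H →L[ℂ] H) :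
    (∀ b' ∈ B.commutant, Commute (ρ' b') a) ↔
      (∀ x ∈ {x : G →L[ℂ] H | ∀ b' ∈ B.commutant, (ρ' b') ∘L x = x ∘L b'},
        a ∘L x ∈ {x : G →L[ℂ] H | ∀ b' ∈ B.commutant, (ρ' b') ∘L x = x ∘L b'}) := by
  constructor
  · intro hc x hx b' hb'
    have h1 := hx b' hb'
    have h2 : ρ' b' * a = a * ρ' b' := hc b' hb'
    ext g
    have := congrArg (fun T => a (T g)) h1
    simp only [ContinuousLinearMap.comp_apply] at this ⊢
    calc ρ' b' (a (x g)) = (ρ' b' * a) (x g) := rfl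
      _ = (a * ρ' b') (x g) := by rw [h2]
      _ = a (ρ' b' (x g)) := rfl
      _ = a (x (b' g)) := this
  · intro hC b' hb'
    have key : (ρ' b') ∘L a = a ∘L (ρ' b') := by
      apply ContinuousLinearMap.ext_on htotal
      rintro h ⟨x, hx, g, rfl⟩
      have h1 : (ρ' b') ∘L (a ∘L x) = (a ∘L x) ∘L b' := hC x hx b' hb'
      have h2 : (ρ' b') ∘L x = x ∘L b' := hx b' hb'
      have e1 := congrFun (congrArg DFunLike.coe h1) g
      have e2 := congrFun (congrArg DFunLike.coe h2) g
      simp only [ContinuousLinearMap.comp_apply] at e1 e2 ⊢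
      rw [e1, ← e2]
    exact ContinuousLinearMap.ext_iff.1 key |> fun h => ContinuousLinearMap.ext h
end
end

section
/- Let A ⊆ B(F) and B ⊆ B(G) be von Neumann algebras, H a complex Hilbert space, ρ : A → B(H) a unital *-homomorphism, ξ ∈ B(G,H) an isometry with S(a) := ξ* ρ(a) ξ ∈ B for all a ∈ A, and f ∈ F, g ∈ G unit vectors with ⟨f, a f⟩ = ⟨g, S(a) g⟩ for all a ∈ A and f cyclic for A; let ξ' : F → H be the unique isometry with ξ'(a f) = ρ(a) ξ g. Suppose additionally ρ' : B' → B(H) is a unital *-homomorphism whose range commutes with ρ(A) and which satisfies ρ'(b') ξ = ξ b' for all b' ∈ B'. Then S'(b') := ξ'* ρ'(b') ξ' defines a unital completely positive map from B' into B(F) whose values lie in the commutant A', and it satisfies φ_g(b' S(a)) = φ_f(S'(b') a) for all a ∈ A and b' ∈ B' (in particular φ_f ∘ S' = φ_g). Moreover S' is normal whenever ρ' is normal. -/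
/-!
Because `f` is cyclic for `A`, the relation `ξ'(a f) = ρ(a) ξ g` upgrades to the intertwining
`ξ' a = ρ(a) ξ'`, and taking adjoints gives `a ξ'* = ξ'* ρ(a)`; since `ρ'(B')` commutes with
`ρ(A)`, the compression `ξ'* ρ'(b') ξ'` therefore commutes with `A`. Linearity, complete
positivity and normality pass from `ρ'` to any compression `V* ρ'(·) V`. The duality is the
computation `⟪g, b' S(a) g⟫ = ⟪g, S(a) b' g⟫ = ⟪ξ g, ρ(a) ρ'(b') ξ g⟫ = ⟪ξ' f, ρ'(b') ξ'(a f)⟫`,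
using `b' ∈ B'`, `ρ'(b') ξ = ξ b'` and `ξ' f = ξ g`; its case `a = 1` is `φ_f ∘ S' = φ_g`.
-/

open scoped InnerProductSpace ComplexOrder
open Filter ContinuousLinearMap

noncomputable section

universe u

def CyclicVector {X : Type u} [NormedAddCommGroup X] [InnerProductSpace ℂ X]
    [CompleteSpace X] (A : Set (X →L[ℂ] X)) (f : X) : Prop :=
  Dense {v : X | ∃ a ∈ A, a f = v}

section Compression

variable {X Y Z : Type*}
  [NormedAddCommGroup X] [InnerProductSpace ℂ X] [CompleteSpace X]
  [NormedAddCommGroup Y] [InnerProductSpace ℂ Y] [CompleteSpace Y]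
  [NormedAddCommGroup Z] [InnerProductSpace ℂ Z] [CompleteSpace Z]

theorem inner_adjoint_comp_comp_apply (V : Y →L[ℂ] Z) (T : Z →L[ℂ] Z) (x y : Y) :
    ⟪x, (adjoint V ∘L (T ∘L V)) y⟫_ℂ = ⟪V x, T (V y)⟫_ℂ := by
  rw [comp_apply, adjoint_inner_right, comp_apply]

theorem commute_adjoint_comp_comp {V : X →L[ℂ] Z} {a : X →L[ℂ] X} {R T : Z →L[ℂ] Z}
    (hV : V ∘L a = R ∘L V) (hVadj : a ∘L adjoint V = adjoint V ∘L R) (hRT : Commute R T) :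
    Commute a (adjoint V ∘L (T ∘L V)) := by
  change a ∘L (adjoint V ∘L (T ∘L V)) = (adjoint V ∘L (T ∘L V)) ∘L a
  calc a ∘L (adjoint V ∘L (T ∘L V)) = adjoint V ∘L ((R * T) ∘L V) := by
        rw [← comp_assoc, hVadj, mul_def, comp_assoc, comp_assoc]
    _ = adjoint V ∘L (T ∘L V) ∘L a := by
        rw [hRT.eq, mul_def, comp_assoc, ← hV, comp_assoc]

/-- The duality `φ_g(b' S(a)) = φ_f(S'(b') a)`, with `R = ρ(a)`, `T = ρ'(b')` and `x = a f`. -/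
theorem inner_apply_compression_eq {ξ : Y →L[ℂ] Z} {ξ' : X →L[ℂ] Z} {b' : Y →L[ℂ] Y}
    {R T : Z →L[ℂ] Z} {f x : X} {g : Y}
    (hb' : Commute b' (adjoint ξ ∘L (R ∘L ξ))) (hT : T ∘L ξ = ξ ∘L b') (hRT : Commute R T)
    (hf : ξ' f = ξ g) (hx : ξ' x = R (ξ g)) :
    ⟪g, b' ((adjoint ξ ∘L (R ∘L ξ)) g)⟫_ℂ = ⟪f, (adjoint ξ' ∘L (T ∘L ξ')) x⟫_ℂ := by
  have hTg : T (ξ g) = ξ (b' g) := congr($hT g)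
  calc ⟪g, b' ((adjoint ξ ∘L (R ∘L ξ)) g)⟫_ℂ = ⟪g, (adjoint ξ ∘L (R ∘L ξ)) (b' g)⟫_ℂ :=
        congr(⟪g, $hb'.eq g⟫_ℂ)
    _ = ⟪ξ g, R (T (ξ g))⟫_ℂ := by rw [inner_adjoint_comp_comp_apply, hTg]
    _ = ⟪f, (adjoint ξ' ∘L (T ∘L ξ')) x⟫_ℂ := by
        rw [inner_adjoint_comp_comp_apply, hf, hx, ← mul_apply_eq_comp, hRT.eq,
          mul_apply_eq_comp]

end Compression

section OnSets

variable {X Y Z : Type u} [NormedAddCommGroup X] [InnerProductSpace ℂ X]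
  [NormedAddCommGroup Y] [InnerProductSpace ℂ Y] [CompleteSpace Y]
  [NormedAddCommGroup Z] [InnerProductSpace ℂ Z] [CompleteSpace Z]
  {A : Set (X →L[ℂ] X)} {j : (X →L[ℂ] X) → (Z →L[ℂ] Z)}

theorem LinearOn.compression (hj : LinearOn A j) (V : Y →L[ℂ] Z) :
    LinearOn A (fun a => adjoint V ∘L (j a ∘L V)) := by
  refine ⟨fun a₁ h₁ a₂ h₂ => ?_, fun c a ha => ?_⟩
  · dsimp only; rw [hj.1 a₁ h₁ a₂ h₂, add_comp, comp_add]
  · dsimp only; rw [hj.2 c a ha, smul_comp, comp_smul]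

theorem NormalOn.compression (hj : NormalOn A j) (V : Y →L[ℂ] Z) :
    NormalOn A (fun a => adjoint V ∘L (j a ∘L V)) := by
  intro l a ha hball hwot y₁ y₂
  simpa only [inner_adjoint_comp_comp_apply] using hj l a ha hball hwot (V y₁) (V y₂)

variable [CompleteSpace X]

theorem CompletelyPositiveOn.compression (hj : CompletelyPositiveOn A j) (V : Y →L[ℂ] Z) :
    CompletelyPositiveOn A (fun a => adjoint V ∘L (j a ∘L V)) := by
  intro n x hx v
  simpa only [inner_adjoint_comp_comp_apply] using hj n x hx (fun i => V (v i))

theorem StarHomOn.completelyPositiveOn (hj : StarHomOn A j) (hA : ∀ a ∈ A, star a ∈ A) :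
    CompletelyPositiveOn A j := by
  intro n x hx v
  have hentry : ∀ i k, ⟪v i, j (star (x i) * x k) (v k)⟫_ℂ = ⟪j (x i) (v i), j (x k) (v k)⟫_ℂ :=
    fun i k => by
      rw [hj.2.1 _ (hA _ (hx i)) _ (hx k), hj.2.2 _ (hx i), mul_apply_eq_comp, star_eq_adjoint,
        adjoint_inner_right]
  calc (0 : ℂ) ≤ ⟪∑ i, j (x i) (v i), ∑ k, j (x k) (v k)⟫_ℂ := by
        rw [inner_self_eq_norm_sq_to_K]
        norm_cast; positivity
    _ = ∑ i, ∑ k, ⟪v i, j (star (x i) * x k) (v k)⟫_ℂ := by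
        rw [sum_inner]
        simp only [inner_sum, hentry]

end OnSets

theorem CyclicVector.comp_eq_comp {X Z : Type u}
    [NormedAddCommGroup X] [InnerProductSpace ℂ X] [CompleteSpace X]
    [NormedAddCommGroup Z] [InnerProductSpace ℂ Z]
    {A : Set (X →L[ℂ] X)} {f : X} (hf : CyclicVector A f)
    (hA : ∀ a ∈ A, ∀ b ∈ A, a * b ∈ A) {ρ : (X →L[ℂ] X) → (Z →L[ℂ] Z)}
    (hρ : ∀ a ∈ A, ∀ b ∈ A, ρ (a * b) = ρ a * ρ b) {V : X →L[ℂ] Z} {w : Z}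
    (hV : ∀ a ∈ A, V (a f) = ρ a w) {a : X →L[ℂ] X} (ha : a ∈ A) :
    V ∘L a = ρ a ∘L V := by
  refine ext_on (hf.mono Submodule.subset_span) ?_
  rintro _ ⟨b, hb, rfl⟩
  rw [comp_apply, comp_apply, ← mul_apply_eq_comp, hV _ (hA a ha b hb), hρ a ha b hb,
    mul_apply_eq_comp, hV b hb]

theorem compression_is_dual_map_general
    {F G H : Type u}
    [NormedAddCommGroup F] [InnerProductSpace ℂ F] [CompleteSpace F]
    [NormedAddCommGroup G] [InnerProductSpace ℂ G] [CompleteSpace G]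
    [NormedAddCommGroup H] [InnerProductSpace ℂ H] [CompleteSpace H]
    (A : VonNeumannAlgebra F) (B : VonNeumannAlgebra G)
    (ρ : (F →L[ℂ] F) → (H →L[ℂ] H))
    (hρhom : StarHomOn (A : Set (F →L[ℂ] F)) ρ)
    (hρunital : ρ 1 = 1)
    (ξ : G →L[ℂ] H)
    (hξiso : (ContinuousLinearMap.adjoint ξ) ∘L ξ = 1)
    (hS : ∀ a ∈ A, (ContinuousLinearMap.adjoint ξ) ∘L (ρ a ∘L ξ) ∈ B)
    (f : F) (g : G)
    (hfcyc : CyclicVector (A : Set (F →L[ℂ] F)) f)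
    (ξ' : F →L[ℂ] H)
    (hξ'iso : (ContinuousLinearMap.adjoint ξ') ∘L ξ' = 1)
    (hξ'val : ∀ a ∈ A, ξ' (a f) = ρ a (ξ g))
    (ρ' : (G →L[ℂ] G) → (H →L[ℂ] H))
    (hρ'hom : StarHomOn ((B.commutant : VonNeumannAlgebra G) : Set (G →L[ℂ] G)) ρ')
    (hρ'unital : ρ' 1 = 1)
    (hcomm : ∀ a ∈ A, ∀ b' ∈ B.commutant, Commute (ρ a) (ρ' b'))
    (hintertwine : ∀ b' ∈ B.commutant, (ρ' b') ∘L ξ = ξ ∘L b') :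
    ((ContinuousLinearMap.adjoint ξ') ∘L (ρ' 1 ∘L ξ') = 1) ∧
    LinearOn ((B.commutant : VonNeumannAlgebra G) : Set (G →L[ℂ] G))
      (fun b' => (ContinuousLinearMap.adjoint ξ') ∘L (ρ' b' ∘L ξ')) ∧
    CompletelyPositiveOn ((B.commutant : VonNeumannAlgebra G) : Set (G →L[ℂ] G))
      (fun b' => (ContinuousLinearMap.adjoint ξ') ∘L (ρ' b' ∘L ξ')) ∧
    (∀ b' ∈ B.commutant,
      (ContinuousLinearMap.adjoint ξ') ∘L (ρ' b' ∘L ξ') ∈ A.commutant) ∧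
    (∀ a ∈ A, ∀ b' ∈ B.commutant,
      ⟪g, b' (((ContinuousLinearMap.adjoint ξ) ∘L (ρ a ∘L ξ)) g)⟫_ℂ =
        ⟪f, ((ContinuousLinearMap.adjoint ξ') ∘L (ρ' b' ∘L ξ')) (a f)⟫_ℂ) ∧
    (∀ b' ∈ B.commutant,
      ⟪f, ((ContinuousLinearMap.adjoint ξ') ∘L (ρ' b' ∘L ξ')) f⟫_ℂ = ⟪g, b' g⟫_ℂ) ∧
    (NormalOn ((B.commutant : VonNeumannAlgebra G) : Set (G →L[ℂ] G)) ρ' →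
      NormalOn ((B.commutant : VonNeumannAlgebra G) : Set (G →L[ℂ] G))
        (fun b' => (ContinuousLinearMap.adjoint ξ') ∘L (ρ' b' ∘L ξ'))) := by
  have hξ'f : ξ' f = ξ g := by simpa [hρunital] using hξ'val 1 (one_mem A)
  have hξ'A : ∀ a ∈ A, ξ' ∘L a = ρ a ∘L ξ' := fun a ha =>
    hfcyc.comp_eq_comp (fun _ h₁ _ h₂ => mul_mem h₁ h₂) hρhom.2.1 hξ'val ha
  have hAξ'adj : ∀ a ∈ A, a ∘L adjoint ξ' = adjoint ξ' ∘L ρ a := fun a ha => by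
    have h := congr(adjoint $(hξ'A (star a) (star_mem ha)))
    rwa [adjoint_comp, adjoint_comp, ← star_eq_adjoint, star_star, ← star_eq_adjoint,
      ← hρhom.2.2 _ (star_mem ha), star_star] at h
  have hdual : ∀ a ∈ A, ∀ b' ∈ B.commutant,
      ⟪g, b' ((adjoint ξ ∘L (ρ a ∘L ξ)) g)⟫_ℂ = ⟪f, (adjoint ξ' ∘L (ρ' b' ∘L ξ')) (a f)⟫_ℂ :=
    fun a ha b' hb' => inner_apply_compression_eq
      (VonNeumannAlgebra.mem_commutant_iff.mp hb' _ (hS a ha)).symm (hintertwine b' hb')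
      (hcomm a ha b' hb') hξ'f (hξ'val a ha)
  refine ⟨by rwa [hρ'unital, one_def, id_comp], hρ'hom.1.compression ξ',
    (hρ'hom.completelyPositiveOn fun _ => star_mem).compression ξ', fun b' hb' => ?_, hdual,
    fun b' hb' => ?_, fun hnormal => hnormal.compression ξ'⟩
  · exact VonNeumannAlgebra.mem_commutant_iff.mpr fun a ha =>
      commute_adjoint_comp_comp (hξ'A a ha) (hAξ'adj a ha) (hcomm a ha b' hb')
  · have h := hdual 1 (one_mem A) b' hb'
    rw [hρunital, one_def, id_comp, hξiso] at h
    simpa using h.symm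

/-- **The compression `S' = ξ'* ρ'(·) ξ'` is the dual map of `S`.**
In the situation of the previous statement, let `ξ' : F → H` be the unique isometry with
`ξ'(a f) = ρ(a) ξ g`, and let `ρ' : B' → B(H)` be a unital ∗-homomorphism whose range
commutes with `ρ(A)` and with `ρ'(b') ξ = ξ b'` for all `b' ∈ B'`.  Then
`S'(b') := ξ'* ρ'(b') ξ'` is a unital completely positive map `B' → B(F)` with values in
the commutant `A'`, satisfying `φ_g(b' S(a)) = φ_f(S'(b') a)` (in particular
`φ_f ∘ S' = φ_g`), and `S'` is normal whenever `ρ'` is normal. -/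
theorem compression_is_dual_map
    {F G H : Type u}
    [NormedAddCommGroup F] [InnerProductSpace ℂ F] [CompleteSpace F]
    [NormedAddCommGroup G] [InnerProductSpace ℂ G] [CompleteSpace G]
    [NormedAddCommGroup H] [InnerProductSpace ℂ H] [CompleteSpace H]
    (A : VonNeumannAlgebra F) (B : VonNeumannAlgebra G)
    (ρ : (F →L[ℂ] F) → (H →L[ℂ] H))
    (hρhom : StarHomOn (A : Set (F →L[ℂ] F)) ρ)
    (hρunital : ρ 1 = 1)
    (ξ : G →L[ℂ] H)
    (hξiso : (ContinuousLinearMap.adjoint ξ) ∘L ξ = 1)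
    (hS : ∀ a ∈ A, (ContinuousLinearMap.adjoint ξ) ∘L (ρ a ∘L ξ) ∈ B)
    (f : F) (g : G) (hf : ‖f‖ = 1) (hg : ‖g‖ = 1)
    (hcov : ∀ a ∈ A, ⟪f, a f⟫_ℂ =
      ⟪g, ((ContinuousLinearMap.adjoint ξ) ∘L (ρ a ∘L ξ)) g⟫_ℂ)
    (hfcyc : CyclicVector (A : Set (F →L[ℂ] F)) f)
    (ξ' : F →L[ℂ] H)
    (hξ'iso : (ContinuousLinearMap.adjoint ξ') ∘L ξ' = 1)
    (hξ'val : ∀ a ∈ A, ξ' (a f) = ρ a (ξ g))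
    (ρ' : (G →L[ℂ] G) → (H →L[ℂ] H))
    (hρ'hom : StarHomOn ((B.commutant : VonNeumannAlgebra G) : Set (G →L[ℂ] G)) ρ')
    (hρ'unital : ρ' 1 = 1)
    (hcomm : ∀ a ∈ A, ∀ b' ∈ B.commutant, Commute (ρ a) (ρ' b'))
    (hintertwine : ∀ b' ∈ B.commutant, (ρ' b') ∘L ξ = ξ ∘L b') :
    ((ContinuousLinearMap.adjoint ξ') ∘L (ρ' 1 ∘L ξ') = 1) ∧
    LinearOn ((B.commutant : VonNeumannAlgebra G) : Set (G →L[ℂ] G))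
      (fun b' => (ContinuousLinearMap.adjoint ξ') ∘L (ρ' b' ∘L ξ')) ∧
    CompletelyPositiveOn ((B.commutant : VonNeumannAlgebra G) : Set (G →L[ℂ] G))
      (fun b' => (ContinuousLinearMap.adjoint ξ') ∘L (ρ' b' ∘L ξ')) ∧
    (∀ b' ∈ B.commutant,
      (ContinuousLinearMap.adjoint ξ') ∘L (ρ' b' ∘L ξ') ∈ A.commutant) ∧
    (∀ a ∈ A, ∀ b' ∈ B.commutant,
      ⟪g, b' (((ContinuousLinearMap.adjoint ξ) ∘L (ρ a ∘L ξ)) g)⟫_ℂ =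
        ⟪f, ((ContinuousLinearMap.adjoint ξ') ∘L (ρ' b' ∘L ξ')) (a f)⟫_ℂ) ∧
    (∀ b' ∈ B.commutant,
      ⟪f, ((ContinuousLinearMap.adjoint ξ') ∘L (ρ' b' ∘L ξ')) f⟫_ℂ = ⟪g, b' g⟫_ℂ) ∧
    (NormalOn ((B.commutant : VonNeumannAlgebra G) : Set (G →L[ℂ] G)) ρ' →
      NormalOn ((B.commutant : VonNeumannAlgebra G) : Set (G →L[ℂ] G))
        (fun b' => (ContinuousLinearMap.adjoint ξ') ∘L (ρ' b' ∘L ξ'))) :=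
  compression_is_dual_map_general A B ρ hρhom hρunital ξ hξiso hS f g hfcyc ξ' hξ'iso hξ'val ρ'
    hρ'hom hρ'unital hcomm hintertwine
end
end

section
/- Let A ⊆ B(F) and B ⊆ B(G) be von Neumann algebras, H a complex Hilbert space, ρ : A → B(H) a unital *-homomorphism, ξ ∈ B(G,H) an isometry with S(a) := ξ* ρ(a) ξ ∈ B for all a ∈ A, f ∈ F and g ∈ G unit vectors with ⟨f, a f⟩ = ⟨g, S(a) g⟩ for all a ∈ A and f cyclic for A, ξ' : F → H the unique isometry with ξ'(a f) = ρ(a) ξ g, and ρ' : B' → B(H) a unital *-homomorphism whose range commutes with ρ(A) and with ρ'(b') ξ = ξ b' for all b' ∈ B'. Then ρ'(b') ξ'(a f) = ρ(a) ξ b' g for all a ∈ A and b' ∈ B'. Consequently, if g is cyclic for B' and the linear span of {ρ(a) ξ g' : a ∈ A, g' ∈ G} is dense in H, then the linear span of {ρ'(b') ξ' f' : b' ∈ B', f' ∈ F} is dense in H (i.e., if ξ is cyclic for the GNS-module of S, then ξ' is cyclic for the GNS-module of the dual map S'). -/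
/-!
Statement 15: the identity `ρ'(b') ξ'(a f) = ρ(a) ξ (b' g)`, and the consequence that
cyclicity of `ξ` for the GNS-module of `S` implies cyclicity of `ξ'` for the GNS-module
of the dual map `S'`.
-/

open scoped InnerProductSpace ComplexOrder
open Filter ContinuousLinearMap

noncomputable section

universe u

/-- **Cyclicity transfers from the GNS-module of `S` to that of `S'`.**
In the situation of Statements 13/14: `ρ'(b') ξ'(a f) = ρ(a) ξ (b' g)` for all `a ∈ A`
and `b' ∈ B'`.  Consequently, if `g` is cyclic for `B'` and `{ρ(a) ξ g' : a ∈ A, g' ∈ G}`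
is total in `H`, then `{ρ'(b') ξ' f' : b' ∈ B', f' ∈ F}` is total in `H`. -/
theorem cyclicity_of_dual_gns_module
    {F G H : Type u}
    [NormedAddCommGroup F] [InnerProductSpace ℂ F] [CompleteSpace F]
    [NormedAddCommGroup G] [InnerProductSpace ℂ G] [CompleteSpace G]
    [NormedAddCommGroup H] [InnerProductSpace ℂ H] [CompleteSpace H]
    (A : VonNeumannAlgebra F) (B : VonNeumannAlgebra G)
    (ρ : (F →L[ℂ] F) → (H →L[ℂ] H))
    (hρhom : StarHomOn (A : Set (F →L[ℂ] F)) ρ)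
    (hρunital : ρ 1 = 1)
    (ξ : G →L[ℂ] H)
    (hξiso : (ContinuousLinearMap.adjoint ξ) ∘L ξ = 1)
    (hS : ∀ a ∈ A, (ContinuousLinearMap.adjoint ξ) ∘L (ρ a ∘L ξ) ∈ B)
    (f : F) (g : G) (hf : ‖f‖ = 1) (hg : ‖g‖ = 1)
    (hcov : ∀ a ∈ A, ⟪f, a f⟫_ℂ =
      ⟪g, ((ContinuousLinearMap.adjoint ξ) ∘L (ρ a ∘L ξ)) g⟫_ℂ)
    (hfcyc : CyclicVector (A : Set (F →L[ℂ] F)) f)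
    (ξ' : F →L[ℂ] H)
    (hξ'iso : (ContinuousLinearMap.adjoint ξ') ∘L ξ' = 1)
    (hξ'val : ∀ a ∈ A, ξ' (a f) = ρ a (ξ g))
    (ρ' : (G →L[ℂ] G) → (H →L[ℂ] H))
    (hρ'hom : StarHomOn ((B.commutant : VonNeumannAlgebra G) : Set (G →L[ℂ] G)) ρ')
    (hρ'unital : ρ' 1 = 1)
    (hcomm : ∀ a ∈ A, ∀ b' ∈ B.commutant, Commute (ρ a) (ρ' b'))
    (hintertwine : ∀ b' ∈ B.commutant, (ρ' b') ∘L ξ = ξ ∘L b') :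
    (∀ a ∈ A, ∀ b' ∈ B.commutant, ρ' b' (ξ' (a f)) = ρ a (ξ (b' g))) ∧
    (CyclicVector ((B.commutant : VonNeumannAlgebra G) : Set (G →L[ℂ] G)) g →
      Dense ((Submodule.span ℂ {h : H | ∃ a ∈ A, ∃ g' : G, ρ a (ξ g') = h} :
        Submodule ℂ H) : Set H) →
      Dense ((Submodule.span ℂ {h : H | ∃ b' ∈ B.commutant, ∃ f' : F, ρ' b' (ξ' f') = h} :
        Submodule ℂ H) : Set H)) := by

  have key : ∀ a ∈ A, ∀ b' ∈ B.commutant, ρ' b' (ξ' (a f)) = ρ a (ξ (b' g)) := by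
    intro a ha b' hb'
    rw [hξ'val a ha]
    have h1 : ρ' b' (ρ a (ξ g)) = ρ a (ρ' b' (ξ g)) := by
      have h := (hcomm a ha b' hb').eq
      calc ρ' b' (ρ a (ξ g)) = (ρ' b' * ρ a) (ξ g) := rfl
        _ = (ρ a * ρ' b') (ξ g) := by rw [h]
        _ = ρ a (ρ' b' (ξ g)) := rfl
    rw [h1]
    congr 1
    have := congrArg (fun T : G →L[ℂ] H => T g) (hintertwine b' hb')
    simpa using this
  refine ⟨key, ?_⟩
  intro hgcyc hdense
  set S : Set H := {h : H | ∃ a ∈ A, ∃ g' : G, ρ a (ξ g') = h} with hSdef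
  set S' : Set H := {h : H | ∃ b' ∈ B.commutant, ∃ f' : F, ρ' b' (ξ' f') = h} with hS'def
  have hsub : S ⊆ closure ((Submodule.span ℂ S' : Submodule ℂ H) : Set H) := by
    rintro h ⟨a, ha, g', rfl⟩
    have hcont : Continuous fun x : G => ρ a (ξ x) := (ρ a).continuous.comp ξ.continuous
    have hclosed : IsClosed {x : G |
        ρ a (ξ x) ∈ closure ((Submodule.span ℂ S' : Submodule ℂ H) : Set H)} :=
      isClosed_closure.preimage hcont
    have hsub2 : {v : G | ∃ b' ∈ (B.commutant : Set (G →L[ℂ] G)), b' g = v} ⊆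
        {x : G | ρ a (ξ x) ∈ closure ((Submodule.span ℂ S' : Submodule ℂ H) : Set H)} := by
      rintro v ⟨b', hb', rfl⟩
      have heq : ρ a (ξ (b' g)) = ρ' b' (ξ' (a f)) := (key a ha b' hb').symm
      have hmem : ρ a (ξ (b' g)) ∈ S' := ⟨b', hb', a f, heq.symm⟩
      exact subset_closure (Submodule.subset_span hmem)
    have huniv : (Set.univ : Set G) ⊆
        {x : G | ρ a (ξ x) ∈ closure ((Submodule.span ℂ S' : Submodule ℂ H) : Set H)} := by
      have := hgcyc.closure_eq
      calc (Set.univ : Set G) = closure {v : G | ∃ b' ∈ (B.commutant : Set (G →L[ℂ] G)), b' g = v} := this.symm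
        _ ⊆ _ := closure_minimal hsub2 hclosed
    exact huniv (Set.mem_univ g')
  have hspan : ((Submodule.span ℂ S : Submodule ℂ H) : Set H) ⊆
      closure ((Submodule.span ℂ S' : Submodule ℂ H) : Set H) := by
    have : Submodule.span ℂ S ≤ (Submodule.span ℂ S').topologicalClosure :=
      Submodule.span_le.2 hsub
    exact this
  have h2 : closure ((Submodule.span ℂ S : Submodule ℂ H) : Set H) ⊆
      closure ((Submodule.span ℂ S' : Submodule ℂ H) : Set H) := by
    have := closure_mono hspan
    simpa [closure_closure] using this
  rw [dense_iff_closure_eq] at hdense ⊢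
  exact Set.eq_univ_of_univ_subset (hdense ▸ h2)
end
end
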